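/- For every c > 0, every solution X of the time-delay system (S_c) converges to the origin: lim_{t→∞} X(t) = 0. That is, the origin of (S_c) is globally attractive. -/

import Mathlib

open Set Matrix

/-- The matrix `A0`. -/
noncomputable def A0 : Matrix (Fin 2) (Fin 2) ℝ := !![-0.1, 0.5; -2, 0]

/-- The matrix `A1`. -/
noncomputable def A1 : Matrix (Fin 2) (Fin 2) ℝ := !![0, 2; -0.5, -0.1]

/-- The saturation function `φ`. -/
noncomputable def phi (s : ℝ) : ℝ := if s < 0 then 0 else if s ≤ 1 then s else 1

/-- `ℝ²` with the Euclidean norm. -/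
abbrev E2 : Type := EuclideanSpace ℝ (Fin 2)

/-- Action of a `2 × 2` matrix on `ℝ²`. -/
noncomputable def act (A : Matrix (Fin 2) (Fin 2) ℝ) (x : E2) : E2 :=
  Matrix.toEuclideanLin A x

/-- The nonlinearity `g(x,u) = (1+|x|²)(φ(u) A1 + (1-φ(u)) A0) x`. -/
noncomputable def gfun (x : E2) (u : ℝ) : E2 :=
  (1 + ‖x‖ ^ 2) • act (phi u • A1 + (1 - phi u) • A0) x

/-- `X = (x, z1, z2) : [-2,∞) → ℝ² × ℝ × ℝ` is a solution of the time-delay system `(S_c)`. -/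
def IsSolution (c : ℝ) (x : ℝ → E2) (z1 z2 : ℝ → ℝ) : Prop :=
  ContinuousOn x (Ici (-2 : ℝ)) ∧ ContinuousOn z1 (Ici (-2 : ℝ)) ∧
  ContinuousOn z2 (Ici (-2 : ℝ)) ∧
  ∀ t : ℝ, 0 < t →
    HasDerivAt x ((c * phi (z2 (t - 2))) • gfun (x t) (z1 (t - 1))
      + (c * (1 - phi (z2 (t - 2)))) • act A0 (x t)) t
    ∧ HasDerivAt z1 (-(z1 t)) t ∧ HasDerivAt z2 (-(z2 t)) t

/-- Euclidean norm `|X(t)|` of the full state `(x(t), z1(t), z2(t)) ∈ ℝ⁴`. -/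
noncomputable def Xnorm (x : ℝ → E2) (z1 z2 : ℝ → ℝ) (t : ℝ) : ℝ :=
  Real.sqrt (‖x t‖ ^ 2 + (z1 t) ^ 2 + (z2 t) ^ 2)

/-- Norm `‖X0‖ = sup_{τ ∈ [-2,0]} |X(τ)|` of the initial segment of a solution. -/
noncomputable def initNorm (x : ℝ → E2) (z1 z2 : ℝ → ℝ) : ℝ :=
  sSup (Xnorm x z1 z2 '' Icc (-2 : ℝ) 0)


/-! The auxiliary states obey `z' = -z`, so they decay and the delayed gain `φ(z1(t-1))`
eventually stays below `1/200`. From then on the `x`-equation reads `x' = μ A0 x + ν A1 x` with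
`μ ≥ c/2` and `ν ≤ μ/100`, however large `|x|` is. Along such a field the quadratic Lyapunov
function `V` of `A0` satisfies `V' ≤ -μ|x|² + 48ν|x|² ≤ -(c/100) V`, and Grönwall's inequality
makes `V ≥ |x|²` decay exponentially. -/

open Filter Topology

lemma phi_nonneg (s : ℝ) : 0 ≤ phi s := by
  unfold phi; split_ifs <;> linarith

lemma phi_le_one (s : ℝ) : phi s ≤ 1 := by
  unfold phi; split_ifs <;> linarith

lemma phi_zero : phi 0 = 0 := by norm_num [phi]

lemma phi_eq_max_min (s : ℝ) : phi s = max 0 (min s 1) := by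
  unfold phi; split_ifs <;> grind

lemma continuous_phi : Continuous phi := by
  simp only [funext phi_eq_max_min]
  fun_prop

lemma act_apply (A : Matrix (Fin 2) (Fin 2) ℝ) (y : E2) (i : Fin 2) :
    act A y i = A i 0 * y 0 + A i 1 * y 1 := by
  simp [act, Matrix.mulVec, dotProduct, Fin.sum_univ_two]

lemma act_add_smul (a b : ℝ) (A B : Matrix (Fin 2) (Fin 2) ℝ) (y : E2) :
    act (a • A + b • B) y = a • act A y + b • act B y := by
  simp [act, map_add, map_smul]

lemma norm_sq_eq (y : E2) : ‖y‖ ^ 2 = y 0 ^ 2 + y 1 ^ 2 := by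
  simp [EuclideanSpace.norm_sq_eq, Fin.sum_univ_two]

lemma field_eq_smul_act_add_smul_act (c B u : ℝ) (y : E2) :
    (c * B) • gfun y u + (c * (1 - B)) • act A0 y =
      (c * B * (1 + ‖y‖ ^ 2) * (1 - phi u) + c * (1 - B)) • act A0 y
        + (c * B * (1 + ‖y‖ ^ 2) * phi u) • act A1 y := by
  rw [gfun, act_add_smul]
  module

/-- `lyapunov y = yᵀ P y` with `P = !![25, -1; -1, 6.3]`, the solution of `A0ᵀ P + P A0 = -1`. -/
noncomputable def lyapunov (y : E2) : ℝ := 25 * y 0 ^ 2 - 2 * (y 0 * y 1) + 6.3 * y 1 ^ 2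

noncomputable def lyapunovDeriv (y v : E2) : ℝ :=
  50 * y 0 * v 0 - 2 * (v 0 * y 1 + y 0 * v 1) + 12.6 * y 1 * v 1

lemma HasDerivAt.lyapunov {x : ℝ → E2} {v : E2} {t : ℝ} (hx : HasDerivAt x v t) :
    HasDerivAt (fun s => lyapunov (x s)) (lyapunovDeriv (x t) v) t := by
  have hcoord (i : Fin 2) : HasDerivAt (fun s => x s i) (v i) t :=
    (EuclideanSpace.proj (𝕜 := ℝ) i).hasFDerivAt.comp_hasDerivAt t hx
  refine ((((hcoord 0).pow 2).const_mul 25).sub (((hcoord 0).mul (hcoord 1)).const_mul 2)).add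
    (((hcoord 1).pow 2).const_mul 6.3) |>.congr_deriv ?_
  simp only [lyapunovDeriv]
  ring

lemma norm_sq_le_lyapunov (y : E2) : ‖y‖ ^ 2 ≤ lyapunov y := by
  rw [norm_sq_eq, lyapunov]
  nlinarith [sq_nonneg (24 * y 0 - y 1), sq_nonneg (y 1)]

lemma lyapunov_le (y : E2) : lyapunov y ≤ 26 * ‖y‖ ^ 2 := by
  rw [norm_sq_eq, lyapunov]
  nlinarith [sq_nonneg (y 0 + y 1), sq_nonneg (y 1)]

lemma lyapunovDeriv_add_smul (y u w : E2) (a b : ℝ) :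
    lyapunovDeriv y (a • u + b • w) = a * lyapunovDeriv y u + b * lyapunovDeriv y w := by
  simp only [lyapunovDeriv, PiLp.add_apply, PiLp.smul_apply, smul_eq_mul]
  ring

lemma lyapunovDeriv_act_A0 (y : E2) : lyapunovDeriv y (act A0 y) = -‖y‖ ^ 2 := by
  simp [lyapunovDeriv, act_apply, A0, norm_sq_eq]
  ring

lemma lyapunovDeriv_act_A1_le (y : E2) : lyapunovDeriv y (act A1 y) ≤ 48 * ‖y‖ ^ 2 := by
  simp [lyapunovDeriv, act_apply, A1, norm_sq_eq]
  nlinarith [sq_nonneg (47 * y 0 - 46.95 * y 1), sq_nonneg (y 1)]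

lemma lyapunovDeriv_combination_le {c μ ν : ℝ} (hc : 0 ≤ c) (hμ : c / 2 ≤ μ) (hν₀ : 0 ≤ ν)
    (hν : ν ≤ μ / 100) (y : E2) :
    lyapunovDeriv y (μ • act A0 y + ν • act A1 y) ≤ -(c / 100) * lyapunov y := by
  rw [lyapunovDeriv_add_smul, lyapunovDeriv_act_A0]
  have hr : 0 ≤ ‖y‖ ^ 2 := by positivity
  nlinarith [mul_le_mul_of_nonneg_left (lyapunovDeriv_act_A1_le y) hν₀,
    mul_nonneg (sub_nonneg.2 hν) hr, mul_nonneg (sub_nonneg.2 hμ) hr,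
    mul_nonneg hc (sub_nonneg.2 (lyapunov_le y))]

lemma lyapunovDeriv_field_le {c B u : ℝ} (hc : 0 ≤ c) (hB₀ : 0 ≤ B) (hB₁ : B ≤ 1)
    (hu : phi u ≤ 1 / 200) (y : E2) :
    lyapunovDeriv y ((c * B) • gfun y u + (c * (1 - B)) • act A0 y) ≤ -(c / 100) * lyapunov y := by
  rw [field_eq_smul_act_add_smul_act]
  have hφ := phi_nonneg u
  have hp : c * B ≤ c * B * (1 + ‖y‖ ^ 2) := by
    nlinarith [mul_nonneg (mul_nonneg hc hB₀) (sq_nonneg ‖y‖)]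
  have hp₀ : 0 ≤ c * B := mul_nonneg hc hB₀
  apply lyapunovDeriv_combination_le hc
  · nlinarith [mul_le_mul_of_nonneg_right hp (by linarith : 0 ≤ 1 - phi u),
      mul_le_mul_of_nonneg_left hu hp₀]
  · positivity
  · nlinarith [mul_nonneg (hp₀.trans hp) (by linarith : 0 ≤ 1 / 200 - phi u)]

lemma tendsto_zero_of_hasDerivAt_le_neg_mul {f f' : ℝ → ℝ} {k : ℝ} (hk : 0 < k) (hf₀ : 0 ≤ f)
    (hf : ∀ᶠ t in atTop, HasDerivAt f (f' t) t ∧ f' t ≤ -k * f t) :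
    Tendsto f atTop (𝓝 0) := by
  obtain ⟨T, hT⟩ := eventually_atTop.1 hf
  have hbound : ∀ t ≥ T, f t ≤ f T * Real.exp (-k * (t - T)) := by
    intro t ht
    have hcont : ContinuousOn f (Icc T t) := fun s hs =>
      (hT s hs.1).1.continuousAt.continuousWithinAt
    simpa [gronwallBound_ε0] using le_gronwallBound_of_liminf_deriv_right_le (K := -k) (ε := 0)
      hcont (fun s hs r hr => (hT s hs.1).1.hasDerivWithinAt.liminf_right_slope_le hr) le_rfl
      (fun s hs => (add_zero (-k * f s)).symm ▸ (hT s hs.1).2) t ⟨ht, le_rfl⟩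
  have hexp : Tendsto (fun t => f T * Real.exp (-k * (t - T))) atTop (𝓝 0) := by
    have hlin : Tendsto (fun t => -k * (t - T)) atTop atBot :=
      (tendsto_atTop_add_const_right atTop (-T) tendsto_id).const_mul_atTop_of_neg (by linarith)
    simpa using (Real.tendsto_exp_atBot.comp hlin).const_mul (f T)
  exact tendsto_of_tendsto_of_tendsto_of_le_of_le' tendsto_const_nhds hexp
    (Eventually.of_forall hf₀) (eventually_atTop.2 ⟨T, hbound⟩)

lemma tendsto_zero_of_norm_sq_tendsto_zero {E : Type*} [SeminormedAddCommGroup E] {f : ℝ → E}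
    (hf : Tendsto (fun t => ‖f t‖ ^ 2) atTop (𝓝 0)) : Tendsto f atTop (𝓝 0) := by
  rw [tendsto_zero_iff_norm_tendsto_zero]
  simpa using hf.sqrt

lemma tendsto_zero_of_hasDerivAt_neg {z : ℝ → ℝ} (hz : ∀ᶠ t in atTop, HasDerivAt z (-z t) t) :
    Tendsto z atTop (𝓝 0) := by
  refine tendsto_zero_of_norm_sq_tendsto_zero ?_
  simp only [Real.norm_eq_abs, sq_abs]
  refine tendsto_zero_of_hasDerivAt_le_neg_mul (f' := fun t => -2 * z t ^ 2) two_pos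
    (fun t => sq_nonneg (z t)) ?_
  filter_upwards [hz] with t ht
  exact ⟨(ht.pow 2).congr_deriv (by ring), le_rfl⟩

lemma tendsto_zero_of_lyapunovDeriv_le {x v : ℝ → E2} {k : ℝ} (hk : 0 < k)
    (hx : ∀ᶠ t in atTop, HasDerivAt x (v t) t ∧ lyapunovDeriv (x t) (v t) ≤ -k * lyapunov (x t)) :
    Tendsto x atTop (𝓝 0) := by
  have hV : Tendsto (fun t => lyapunov (x t)) atTop (𝓝 0) := by
    refine tendsto_zero_of_hasDerivAt_le_neg_mul (f' := fun t => lyapunovDeriv (x t) (v t)) hk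
      (fun t => (sq_nonneg _).trans (norm_sq_le_lyapunov (x t))) ?_
    filter_upwards [hx] with t ht
    exact ⟨ht.1.lyapunov, ht.2⟩
  refine tendsto_zero_of_norm_sq_tendsto_zero ?_
  exact tendsto_of_tendsto_of_tendsto_of_le_of_le tendsto_const_nhds hV
    (fun t => sq_nonneg _) (fun t => norm_sq_le_lyapunov (x t))

/-- Global attractivity of the origin of `(S_c)`: every solution converges to `0`. -/
theorem stmt_7 (c : ℝ) (hc : 0 < c)
    (x : ℝ → E2) (z1 z2 : ℝ → ℝ) (hsol : IsSolution c x z1 z2) :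
    Filter.Tendsto (fun t => (x t, z1 t, z2 t)) Filter.atTop
      (nhds (0, 0, 0)) := by
  obtain ⟨-, -, -, hode⟩ := hsol
  have hpos : ∀ᶠ t : ℝ in atTop, 0 < t := eventually_gt_atTop 0
  have hz1 := tendsto_zero_of_hasDerivAt_neg (hpos.mono fun t ht => (hode t ht).2.1)
  have hz2 := tendsto_zero_of_hasDerivAt_neg (hpos.mono fun t ht => (hode t ht).2.2)
  have hgain : ∀ᶠ t in atTop, phi (z1 (t - 1)) ≤ 1 / 200 := by
    have := (continuous_phi.tendsto 0).comp
      (hz1.comp (tendsto_atTop_add_const_right _ (-1) tendsto_id))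
    rw [phi_zero] at this
    exact this.eventually (eventually_le_nhds (by norm_num))
  have hx : Tendsto x atTop (𝓝 0) := by
    apply tendsto_zero_of_lyapunovDeriv_le (k := c / 100) (by positivity)
    filter_upwards [hpos, hgain] with t ht hsmall
    exact ⟨(hode t ht).1, lyapunovDeriv_field_le hc.le (phi_nonneg _) (phi_le_one _) hsmall _⟩
  exact hx.prodMk_nhds (hz1.prodMk_nhds hz2)
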